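/- For each KPP reaction function f, the propagation speed v*(u_c) tends to 2 as u_c → 0⁺, where 2 is the minimum propagation speed of permanent form travelling waves in the absence of cut-off. -/

import Mathlib

open Real Filter Topology

/-- A KPP reaction function: `f ∈ C¹`, `f 0 = f 1 = 0`, `f' 0 = 1`, `f' 1 < 0`,
`0 < f u ≤ u` on `(0,1)` and `f u < 0` for `u > 1`. -/
def IsKPP (f : ℝ → ℝ) : Prop :=
  ContDiff ℝ 1 f ∧ f 0 = 0 ∧ f 1 = 0 ∧ deriv f 0 = 1 ∧ deriv f 1 < 0 ∧
  (∀ u : ℝ, 0 < u → u < 1 → 0 < f u ∧ f u ≤ u) ∧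
  (∀ u : ℝ, 1 < u → f u < 0)

/-- The cut-off reaction function: `f_c u = f u` for `u > u_c`, and `0` for `u ≤ u_c`. -/
noncomputable def cutoff (f : ℝ → ℝ) (uc : ℝ) : ℝ → ℝ :=
  fun u => if uc < u then f u else 0

/-- A permanent form travelling wave solution with cut-off `uc` and speed `v`. -/
def IsPTW (f : ℝ → ℝ) (uc v : ℝ) (U : ℝ → ℝ) : Prop :=
  ContDiff ℝ 1 U ∧
  (∀ y : ℝ, y ≠ 0 → ContDiffAt ℝ 2 U y) ∧
  (∀ y : ℝ, y ≠ 0 → deriv (deriv U) y + v * deriv U y + cutoff f uc (U y) = 0) ∧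
  U 0 = uc ∧
  (∀ y : ℝ, y < 0 → uc ≤ U y ∧ U y ≤ 1) ∧
  (∀ y : ℝ, 0 < y → 0 ≤ U y ∧ U y ≤ uc) ∧
  Tendsto U atBot (𝓝 1) ∧
  Tendsto U atTop (𝓝 0)

/-!
Upper bound: for `v ≥ 2` the function `e^{v y / 2} (U' + v U / 2)` is nondecreasing on `y ≤ 0`,
because `f_c(u) ≤ u ≤ v² u / 4`. Its value at `0` is `-v u_c / 2`, yet `U'` gets arbitrarily
close to `0` on `y ≤ 0` (otherwise `U` could not converge at `-∞`), where the function is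
`≥ -v u_c / 4`.

Lower bound: on `y > 0` the equation reads `U'' + v U' = 0`, so `U' + v U` is constant there and
`U → 0` forces `U'(0) = -v u_c`. On `y < 0`, `e^{v y} U'` is nonincreasing, hence
`U ≤ u_c e^{-v y}`: the wave reaches a fixed level `β` only at distance `≥ log (β / u_c) / v`
to the left of the cut-off point. Where `u_c < U ≤ β` we have `f(U) ≥ m U` with `m < 1` close to
`1`, so if `v² < 4 m` the Riccati variable `r = -U'/U` satisfies `r' ≥ (r - v/2)² + ω²` with
`ω² = m - v²/4`, and `arctan ((r - v/2) / ω) - ω y` is nondecreasing; a positive solution thus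
cannot stay in that range on an interval of length `π / ω`. As `u_c → 0` this is violated unless
`v²` approaches `4`.
-/

open Set

theorem tendsto_atBot_of_eventually_le_deriv {g : ℝ → ℝ} (hg : Differentiable ℝ g) {c : ℝ}
    (hc : 0 < c) (h : ∀ᶠ x in atBot, c ≤ deriv g x) : Tendsto g atBot atBot := by
  obtain ⟨a, ha⟩ := eventually_atBot.1 h
  have hlin : ∀ x ≤ a, g x ≤ g a + c * (x - a) := fun x hx => by
    have := (convex_Iic a).mul_sub_le_image_sub_of_le_deriv hg.continuous.continuousOn
      hg.differentiableOn (fun y hy => ha y (interior_subset hy : y ∈ Iic a)) x hx a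
      self_mem_Iic hx
    linarith
  refine tendsto_atBot_mono' _ (eventually_atBot.2 ⟨a, hlin⟩) ?_
  exact tendsto_atBot_add_const_left _ _
    ((tendsto_atBot_add_const_right _ _ tendsto_id).const_mul_atBot hc)

theorem tendsto_atTop_of_eventually_le_deriv {g : ℝ → ℝ} (hg : Differentiable ℝ g) {c : ℝ}
    (hc : 0 < c) (h : ∀ᶠ x in atTop, c ≤ deriv g x) : Tendsto g atTop atTop := by
  obtain ⟨a, ha⟩ := eventually_atTop.1 h
  have hlin : ∀ x ≥ a, g a + c * (x - a) ≤ g x := fun x hx => by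
    have := (convex_Ici a).mul_sub_le_image_sub_of_le_deriv hg.continuous.continuousOn
      hg.differentiableOn (fun y hy => ha y (interior_subset hy : y ∈ Ici a)) a self_mem_Ici
      x hx hx
    linarith
  refine tendsto_atTop_mono' _ (eventually_atTop.2 ⟨a, hlin⟩) ?_
  exact tendsto_atTop_add_const_left _ _
    ((tendsto_atTop_add_const_right _ _ tendsto_id).const_mul_atTop hc)

theorem eq_zero_of_tendsto_of_tendsto_deriv {g : ℝ → ℝ} (hg : Differentiable ℝ g) {L c : ℝ}
    (hL : Tendsto g atTop (𝓝 L)) (hc : Tendsto (deriv g) atTop (𝓝 c)) : c = 0 := by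
  by_contra hne
  rcases lt_or_gt_of_ne hne with hneg | hpos
  · have hd : Tendsto (deriv fun x => -g x) atTop (𝓝 (-c)) := by
      simpa only [deriv.fun_neg'] using hc.neg
    exact not_tendsto_nhds_of_tendsto_atTop (tendsto_atTop_of_eventually_le_deriv hg.neg
      (half_pos (neg_pos.2 hneg)) (hd.eventually (eventually_ge_nhds (by linarith)))) _ hL.neg
  · exact not_tendsto_nhds_of_tendsto_atTop (tendsto_atTop_of_eventually_le_deriv hg
      (half_pos hpos) (hc.eventually (eventually_ge_nhds (by linarith)))) _ hL

theorem monotoneOn_Iic_of_hasDerivAt_nonneg {g g' : ℝ → ℝ} {a : ℝ} (hg : ContinuousOn g (Iic a))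
    (hd : ∀ x < a, HasDerivAt g (g' x) x) (h0 : ∀ x < a, 0 ≤ g' x) : MonotoneOn g (Iic a) :=
  monotoneOn_of_hasDerivWithinAt_nonneg (convex_Iic a) hg
    (by simpa using fun x hx => (hd x hx).hasDerivWithinAt) (by simpa using h0)

theorem antitoneOn_Iic_of_hasDerivAt_nonpos {g g' : ℝ → ℝ} {a : ℝ} (hg : ContinuousOn g (Iic a))
    (hd : ∀ x < a, HasDerivAt g (g' x) x) (h0 : ∀ x < a, g' x ≤ 0) : AntitoneOn g (Iic a) :=
  antitoneOn_of_hasDerivWithinAt_nonpos (convex_Iic a) hg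
    (by simpa using fun x hx => (hd x hx).hasDerivWithinAt) (by simpa using h0)

theorem mul_sub_lt_pi_of_sq_add_sq_le_deriv {r r' : ℝ → ℝ} {a b c ω : ℝ} (hω : 0 < ω)
    (hr : ContinuousOn r (Icc a b)) (hderiv : ∀ x ∈ Ioo a b, HasDerivAt r (r' x) x)
    (hle : ∀ x ∈ Ioo a b, (r x - c) ^ 2 + ω ^ 2 ≤ r' x) : ω * (b - a) < π := by
  rcases lt_or_ge b a with hba | hab
  · nlinarith [pi_pos]
  have hmono : MonotoneOn (fun x => arctan ((r x - c) / ω) - ω * x) (Icc a b) := by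
    refine monotoneOn_of_hasDerivWithinAt_nonneg (convex_Icc a b)
      (f' := fun x => 1 / (1 + ((r x - c) / ω) ^ 2) * (r' x / ω) - ω * 1) (by fun_prop)
      (fun x hx => ?_) (fun x hx => ?_) <;> rw [interior_Icc] at hx
    · exact ((((hderiv x hx).sub_const c).div_const ω).arctan.sub
        ((hasDerivAt_id x).const_mul ω)).hasDerivWithinAt
    · have hsq : (r x - c) ^ 2 = ω ^ 2 * ((r x - c) / ω) ^ 2 := by field_simp
      have key : ω * (1 + ((r x - c) / ω) ^ 2) ≤ r' x / ω := by
        rw [le_div_iff₀ hω]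
        nlinarith [hle x hx]
      rw [mul_one, sub_nonneg, one_div_mul_eq_div, le_div_iff₀ (by positivity)]
      linarith
  have := hmono (left_mem_Icc.2 hab) (right_mem_Icc.2 hab) hab
  linarith [neg_pi_div_two_lt_arctan ((r a - c) / ω), arctan_lt_pi_div_two ((r b - c) / ω)]

theorem IsKPP.cutoff_mem_Icc {f : ℝ → ℝ} (hf : IsKPP f) (uc : ℝ) {u : ℝ} (hu : u ∈ Icc 0 1) :
    cutoff f uc u ∈ Icc 0 u := by
  obtain ⟨-, hf0, hf1, -, -, hmid, -⟩ := hf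
  have hfu : f u ∈ Icc 0 u := by
    rcases hu.1.eq_or_lt with rfl | hu0
    · simp [hf0]
    rcases hu.2.eq_or_lt with rfl | hu1
    · simp [hf1]
    exact ⟨(hmid u hu0 hu1).1.le, (hmid u hu0 hu1).2⟩
  unfold cutoff
  split_ifs
  exacts [hfu, ⟨le_rfl, hu.1⟩]

theorem IsKPP.eventually_mul_le {f : ℝ → ℝ} (hf : IsKPP f) {m : ℝ} (hm : m < 1) :
    ∀ᶠ u in 𝓝[>] 0, m * u ≤ f u := by
  obtain ⟨hC1, hf0, -, hf'0, -⟩ := hf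
  have hd : HasDerivAt f 1 0 := hf'0 ▸ (hC1.differentiable one_ne_zero 0).hasDerivAt
  have hslope := (hasDerivAt_iff_tendsto_slope.1 hd).mono_left
    (nhdsWithin_mono 0 fun u (hu : 0 < u) => hu.ne')
  filter_upwards [hslope.eventually (eventually_gt_nhds hm), self_mem_nhdsWithin]
    with u hu (hu0 : 0 < u)
  rw [slope_def_field, hf0, sub_zero, sub_zero, lt_div_iff₀ hu0] at hu
  exact hu.le

namespace IsPTW

variable {f : ℝ → ℝ} {uc v : ℝ} {U : ℝ → ℝ}

theorem differentiable (hU : IsPTW f uc v U) : Differentiable ℝ U :=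
  hU.1.differentiable one_ne_zero

theorem continuous_deriv (hU : IsPTW f uc v U) : Continuous (deriv U) :=
  hU.1.continuous_deriv le_rfl

theorem hasDerivAt_deriv (hU : IsPTW f uc v U) {y : ℝ} (hy : y ≠ 0) :
    HasDerivAt (deriv U) (-(v * deriv U y + cutoff f uc (U y))) y := by
  have ⟨_, hC2, hode, _⟩ := hU
  have h := ((hC2 y hy).derivWithin (m := 1) (by norm_num)).differentiableAt one_ne_zero
  have heq : deriv (deriv U) y = -(v * deriv U y + cutoff f uc (U y)) := by
    linarith [hode y hy]
  exact heq ▸ h.hasDerivAt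

theorem apply_mem_Icc_of_neg (hU : IsPTW f uc v U) (huc : 0 ≤ uc) {y : ℝ} (hy : y < 0) :
    U y ∈ Icc 0 1 :=
  have ⟨_, _, _, _, hleft, _⟩ := hU
  ⟨huc.trans (hleft y hy).1, (hleft y hy).2⟩

theorem hasDerivAt_exp_mul_deriv_add (hU : IsPTW f uc v U) {a b : ℝ} (hab : a + b = v) {y : ℝ}
    (hy : y ≠ 0) :
    HasDerivAt (fun y => exp (a * y) * (deriv U y + b * U y))
      (exp (a * y) * (a * b * U y - cutoff f uc (U y))) y := by
  have hexp := ((hasDerivAt_id' y).const_mul a).exp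
  have hsum := (hU.hasDerivAt_deriv hy).fun_add ((hU.differentiable y).hasDerivAt.const_mul b)
  refine (hexp.mul hsum).congr_deriv ?_
  rw [← hab]
  ring

theorem continuous_exp_mul_deriv_add (hU : IsPTW f uc v U) (a b : ℝ) :
    Continuous fun y => exp (a * y) * (deriv U y + b * U y) := by
  have := hU.continuous_deriv
  have := hU.differentiable.continuous
  fun_prop

theorem deriv_zero (hU : IsPTW f uc v U) : deriv U 0 = -(v * uc) := by
  have ⟨_, _, _, hU0, _, hright, _, htop⟩ := hU
  set h := fun y => deriv U y + v * U y
  have hcont : ContinuousOn h (Ici 0) := by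
    simpa [h] using (hU.continuous_exp_mul_deriv_add 0 v).continuousOn
  have hderiv : ∀ y ∈ interior (Ici (0 : ℝ)), HasDerivWithinAt h 0 (interior (Ici 0)) y := by
    intro y hy
    rw [interior_Ici] at hy ⊢
    have hcut : cutoff f uc (U y) = 0 := if_neg (hright y hy).2.not_gt
    simpa [h, hcut] using (hU.hasDerivAt_exp_mul_deriv_add (zero_add v) hy.ne').hasDerivWithinAt
  have hconst : ∀ y ≥ 0, h y = h 0 := fun y hy =>
    le_antisymm
      (antitoneOn_of_hasDerivWithinAt_nonpos (convex_Ici 0) hcont hderiv (fun _ _ => le_rfl)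
        self_mem_Ici hy hy)
      (monotoneOn_of_hasDerivWithinAt_nonneg (convex_Ici 0) hcont hderiv (fun _ _ => le_rfl)
        self_mem_Ici hy hy)
  have hlim : Tendsto (deriv U) atTop (𝓝 (h 0)) := by
    have := (tendsto_const_nhds (x := h 0)).sub (htop.const_mul v)
    rw [mul_zero, sub_zero] at this
    refine this.congr' ((eventually_ge_atTop 0).mono fun y hy => ?_)
    rw [← hconst y hy]
    ring
  have := eq_zero_of_tendsto_of_tendsto_deriv hU.differentiable htop hlim
  simp only [h, hU0] at this
  linarith

theorem antitoneOn_exp_mul_deriv (hU : IsPTW f uc v U) (hf : IsKPP f) (huc : 0 ≤ uc) :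
    AntitoneOn (fun y => exp (v * y) * deriv U y) (Iic 0) := by
  have hd : ∀ y < 0, HasDerivAt (fun y => exp (v * y) * deriv U y)
      (exp (v * y) * (v * 0 * U y - cutoff f uc (U y))) y := fun y hy => by
    simpa using hU.hasDerivAt_exp_mul_deriv_add (add_zero v) hy.ne
  refine antitoneOn_Iic_of_hasDerivAt_nonpos (by simpa using
    (hU.continuous_exp_mul_deriv_add v 0).continuousOn) hd fun y hy => ?_
  have := (hf.cutoff_mem_Icc uc (hU.apply_mem_Icc_of_neg huc hy)).1
  rw [mul_zero, zero_mul, zero_sub, mul_neg]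
  exact neg_nonpos.2 (by positivity)

theorem neg_mul_le_exp_mul_deriv (hU : IsPTW f uc v U) (hf : IsKPP f) (huc : 0 ≤ uc) {y : ℝ}
    (hy : y ≤ 0) : -(v * uc) ≤ exp (v * y) * deriv U y := by
  simpa [hU.deriv_zero] using hU.antitoneOn_exp_mul_deriv hf huc hy self_mem_Iic hy

theorem apply_le_mul_exp (hU : IsPTW f uc v U) (hf : IsKPP f) (huc : 0 ≤ uc) {y : ℝ}
    (hy : y ≤ 0) : U y ≤ uc * exp (-(v * y)) := by
  have hmono : MonotoneOn (fun y => U y - uc * exp (-(v * y))) (Iic 0) := by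
    have := hU.differentiable.continuous
    refine monotoneOn_Iic_of_hasDerivAt_nonneg (by fun_prop)
      (fun x _ => (hU.differentiable x).hasDerivAt.sub
        (((hasDerivAt_id' x).const_mul v).fun_neg.exp.const_mul uc)) fun x hx => ?_
    have h := mul_le_mul_of_nonneg_right (hU.neg_mul_le_exp_mul_deriv hf huc hx.le)
      (exp_pos (-(v * x))).le
    rw [mul_comm (exp _), mul_assoc, ← exp_add, add_neg_cancel, exp_zero, mul_one] at h
    linarith
  simpa [(hU.2.2.2.1 : U 0 = uc)] using hmono hy self_mem_Iic hy

theorem speed_pos (hU : IsPTW f uc v U) (hf : IsKPP f) (huc : uc ∈ Ico 0 1) : 0 < v := by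
  have ⟨_, _, _, _, _, _, hbot, _⟩ := hU
  by_contra! hv
  have hle : ∀ y ≤ 0, U y ≤ uc := fun y hy =>
    (hU.apply_le_mul_exp hf huc.1 hy).trans
      (mul_le_of_le_one_right huc.1 (exp_le_one_iff.2 (by nlinarith)))
  obtain ⟨y, hy1, hy0⟩ :=
    ((hbot.eventually (eventually_gt_nhds huc.2)).and (eventually_le_atBot 0)).exists
  linarith [hle y hy0]

theorem deriv_nonpos (hU : IsPTW f uc v U) (hf : IsKPP f) (huc : uc ∈ Ico 0 1) {y : ℝ}
    (hy : y ≤ 0) : deriv U y ≤ 0 := by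
  have ⟨_, _, _, _, _, _, hbot, _⟩ := hU
  by_contra! hpos
  have hv := hU.speed_pos hf huc
  have hge : ∀ z ≤ y, deriv U y ≤ deriv U z := fun z hz => by
    have h1 := hU.antitoneOn_exp_mul_deriv hf huc.1 (hz.trans hy) hy hz
    have h2 : exp (v * z) ≤ exp (v * y) := exp_le_exp.2 (by nlinarith)
    exact le_of_mul_le_mul_left (by nlinarith) (exp_pos (v * z))
  exact not_tendsto_nhds_of_tendsto_atBot (tendsto_atBot_of_eventually_le_deriv
    hU.differentiable hpos (eventually_atBot.2 ⟨y, hge⟩)) 1 hbot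

theorem antitoneOn (hU : IsPTW f uc v U) (hf : IsKPP f) (huc : uc ∈ Ico 0 1) :
    AntitoneOn U (Iic 0) :=
  antitoneOn_Iic_of_hasDerivAt_nonpos hU.differentiable.continuous.continuousOn
    (fun x _ => (hU.differentiable x).hasDerivAt) fun _ hx => hU.deriv_nonpos hf huc hx.le

theorem lt_apply_of_neg (hU : IsPTW f uc v U) (hf : IsKPP f) (huc : uc ∈ Ioo 0 1) {y : ℝ}
    (hy : y < 0) : uc < U y := by
  have hU0 : U 0 = uc := hU.2.2.2.1
  by_contra! hle
  have huc' : uc ∈ Ico 0 1 := Ioo_subset_Ico_self huc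
  have h0 : (0 : ℝ) ∈ Icc y 0 := right_mem_Icc.2 hy.le
  have hconst : ∀ t ∈ Icc y 0, U t = uc := fun t ht =>
    le_antisymm ((hU.antitoneOn hf huc' (ht.1.trans ht.2 : y ≤ 0) ht.2 ht.1).trans hle)
      (hU0 ▸ hU.antitoneOn hf huc' ht.2 self_mem_Iic ht.2)
  have hderiv : deriv U 0 = 0 := (uniqueDiffOn_Icc hy 0 h0).eq_deriv _
    (hU.differentiable 0).hasDerivAt.hasDerivWithinAt
    ((hasDerivWithinAt_const 0 _ uc).congr_of_mem hconst h0)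
  rw [hU.deriv_zero] at hderiv
  nlinarith [hU.speed_pos hf huc', huc.1]

theorem exists_neg_le_deriv (hU : IsPTW f uc v U) {ε : ℝ} (hε : 0 < ε) :
    ∃ y ≤ 0, -ε ≤ deriv U y := by
  have ⟨_, _, _, _, _, _, hbot, _⟩ := hU
  by_contra! h
  have hd : ∀ᶠ y in atBot, ε ≤ deriv (fun y => -U y) y :=
    eventually_atBot.2 ⟨0, fun y hy => by rw [deriv.fun_neg']; linarith [h y hy]⟩
  exact not_tendsto_nhds_of_tendsto_atBot
    (tendsto_atBot_of_eventually_le_deriv hU.differentiable.neg hε hd) _ hbot.neg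

theorem speed_lt_two (hU : IsPTW f uc v U) (hf : IsKPP f) (huc : uc ∈ Ioo 0 1) : v < 2 := by
  have hU0 : U 0 = uc := hU.2.2.2.1
  by_contra! hv
  set H := fun y => exp (v / 2 * y) * (deriv U y + v / 2 * U y)
  have hmono : MonotoneOn H (Iic 0) :=
    monotoneOn_Iic_of_hasDerivAt_nonneg (hU.continuous_exp_mul_deriv_add _ _).continuousOn
      (fun y hy => hU.hasDerivAt_exp_mul_deriv_add (add_halves v) hy.ne) fun y hy => by
        have hmem := hU.apply_mem_Icc_of_neg huc.1.le hy
        have hcut := (hf.cutoff_mem_Icc uc hmem).2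
        have : U y ≤ v / 2 * (v / 2) * U y := le_mul_of_one_le_left hmem.1 (by nlinarith)
        exact mul_nonneg (exp_pos _).le (by linarith)
  have hH0 : H 0 = -(v * uc / 2) := by
    simp only [H, hU.deriv_zero, hU0, mul_zero, exp_zero, one_mul]
    ring
  obtain ⟨y, hy, hslope⟩ := hU.exists_neg_le_deriv (ε := v * uc / 4) (by nlinarith [huc.1])
  have hUy : uc ≤ U y := hU0 ▸ hU.antitoneOn hf (Ioo_subset_Ico_self huc) hy self_mem_Iic hy
  have hexp : exp (v / 2 * y) ≤ 1 := exp_le_one_iff.2 (by nlinarith)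
  have hHy : -(v * uc / 4) ≤ H y := by
    have he := exp_pos (v / 2 * y)
    have hvuc : 0 ≤ v * uc / 4 := by nlinarith [huc.1]
    calc -(v * uc / 4) ≤ exp (v / 2 * y) * -(v * uc / 4) := by
          nlinarith [mul_le_mul_of_nonneg_right hexp hvuc]
      _ ≤ exp (v / 2 * y) * deriv U y := mul_le_mul_of_nonneg_left hslope he.le
      _ ≤ H y := mul_le_mul_of_nonneg_left
        (le_add_of_nonneg_right (by nlinarith [huc.1])) he.le
  nlinarith [hmono hy self_mem_Iic hy, huc.1]

theorem hasDerivAt_neg_deriv_div (hU : IsPTW f uc v U) {y : ℝ} (hy : y ≠ 0) (hUy : U y ≠ 0) :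
    HasDerivAt (fun y => -deriv U y / U y)
      ((deriv U y / U y) ^ 2 + (v * deriv U y + cutoff f uc (U y)) / U y) y := by
  refine ((hU.hasDerivAt_deriv hy).fun_neg.fun_div (hU.differentiable y).hasDerivAt
    hUy).congr_deriv ?_
  field_simp
  ring

theorem mul_log_lt (hU : IsPTW f uc v U) (hf : IsKPP f) (huc : uc ∈ Ioo 0 1) {m β ω : ℝ}
    (hβ : β ∈ Ioo uc 1) (hm : ∀ u ∈ Ioc uc β, m * u ≤ f u) (hω : 0 < ω)
    (hωm : ω ^ 2 + v ^ 2 / 4 ≤ m) : ω * log (β / uc) < 2 * π * v := by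
  have ⟨_, _, _, hU0, _, _, hbot, _⟩ := hU
  have huc' := Ioo_subset_Ico_self huc
  obtain ⟨Y, hYβ, hY0⟩ :=
    ((hbot.eventually (eventually_gt_nhds hβ.2)).and (eventually_le_atBot 0)).exists
  obtain ⟨y₁, hy₁, hUy₁⟩ := intermediate_value_Icc' hY0 hU.differentiable.continuous.continuousOn
    ⟨hU0 ▸ hβ.1.le, hYβ.le⟩
  have hy₁0 : y₁ < 0 := hy₁.2.lt_of_ne fun h => by rw [h, hU0] at hUy₁; exact hβ.1.ne hUy₁
  have hfar : log (β / uc) ≤ v * -y₁ := by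
    rw [log_le_iff_le_exp (div_pos (huc.1.trans hβ.1) huc.1), div_le_iff₀ huc.1, ← hUy₁,
      mul_comm, mul_neg]
    exact hU.apply_le_mul_exp hf huc.1.le hy₁.2
  have hmem : ∀ x ∈ Icc y₁ (y₁ / 2), U x ∈ Ioc uc β := fun x hx =>
    ⟨hU.lt_apply_of_neg hf huc (by linarith [hx.2]),
      hUy₁ ▸ hU.antitoneOn hf huc' hy₁.2 (by linarith [hx.2] : x ≤ 0) hx.1⟩
  have hshort : ω * (y₁ / 2 - y₁) < π := by
    refine mul_sub_lt_pi_of_sq_add_sq_le_deriv (r := fun y => -deriv U y / U y) (c := v / 2) hω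
      ((hU.continuous_deriv.neg.continuousOn).div hU.differentiable.continuous.continuousOn
        fun x hx => (huc.1.trans (hmem x hx).1).ne')
      (fun x hx => hU.hasDerivAt_neg_deriv_div (by linarith [hx.2])
        (huc.1.trans (hmem x (Ioo_subset_Icc_self hx)).1).ne') fun x hx => ?_
    have hx' := hmem x (Ioo_subset_Icc_self hx)
    have hUx : 0 < U x := huc.1.trans hx'.1
    have hcut : cutoff f uc (U x) = f (U x) := if_pos hx'.1
    have hq : m ≤ f (U x) / U x := (le_div_iff₀ hUx).2 (hm _ hx')
    have hsq : (-deriv U x / U x - v / 2) ^ 2 + ω ^ 2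
        = (deriv U x / U x) ^ 2 + v * (deriv U x / U x) + (ω ^ 2 + v ^ 2 / 4) := by ring
    rw [hcut, add_div, mul_div_assoc]
    linarith
  calc ω * log (β / uc) ≤ ω * (v * -y₁) := mul_le_mul_of_nonneg_left hfar hω.le
    _ = 2 * v * (ω * (y₁ / 2 - y₁)) := by ring
    _ < 2 * v * π := mul_lt_mul_of_pos_left hshort (by linarith [hU.speed_pos hf huc'])
    _ = 2 * π * v := by ring

end IsPTW

theorem IsKPP.eventually_lt_speed {f : ℝ → ℝ} (hf : IsKPP f) {v₀ : ℝ} (hv₀ : v₀ < 2) :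
    ∀ᶠ uc in 𝓝[>] 0, ∀ v U, IsPTW f uc v U → v₀ < v := by
  rcases le_or_gt v₀ 0 with hneg | hpos
  · filter_upwards [Ioo_mem_nhdsGT one_pos] with uc huc v U hU
    exact hneg.trans_lt (hU.speed_pos hf (Ioo_subset_Ico_self huc))
  -- chosen so that `m < 1` and `ω ^ 2 + v₀ ^ 2 / 4 = m`
  set m := (1 + v₀ ^ 2 / 4) / 2 with hm
  set ω := sqrt ((1 - v₀ ^ 2 / 4) / 2)
  have hω : 0 < ω := sqrt_pos.2 (by nlinarith)
  have hω2 : ω ^ 2 = (1 - v₀ ^ 2 / 4) / 2 := sq_sqrt (by nlinarith)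
  obtain ⟨β, hβ0, hβ⟩ := mem_nhdsGT_iff_exists_Ioc_subset.1
    ((hf.eventually_mul_le (m := m) (by rw [hm]; nlinarith)).and (Ioo_mem_nhdsGT one_pos))
  have hlog : Tendsto (fun uc => log (β / uc)) (𝓝[>] 0) atTop := by
    simpa only [div_eq_mul_inv, Function.comp_def] using
      tendsto_log_atTop.comp (tendsto_inv_nhdsGT_zero.const_mul_atTop hβ0)
  filter_upwards [Ioo_mem_nhdsGT hβ0, hlog.eventually_ge_atTop (4 * π / ω)]
    with uc huc hlarge v U hU
  by_contra! hv
  have hβ1 : β < 1 := (hβ ⟨hβ0, le_rfl⟩).2.2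
  have huc1 : uc ∈ Ioo 0 1 := ⟨huc.1, huc.2.trans hβ1⟩
  have hv0 := hU.speed_pos hf (Ioo_subset_Ico_self huc1)
  have hlt := hU.mul_log_lt hf huc1 ⟨huc.2, hβ1⟩ (fun u hu => (hβ ⟨huc.1.trans hu.1, hu.2⟩).1) hω
    (m := m) (by nlinarith [mul_le_mul hv hv hv0.le hpos.le])
  rw [div_le_iff₀' hω] at hlarge
  nlinarith [pi_pos]

/-- The propagation speed tends to `2` as the cut-off tends to `0⁺`. -/
theorem vstar_tendsto_two (f : ℝ → ℝ) (hf : IsKPP f) (vstar : ℝ → ℝ)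
    (hvstar : ∀ uc ∈ Set.Ioo (0:ℝ) 1, 0 ≤ vstar uc ∧ ∃ U : ℝ → ℝ, IsPTW f uc (vstar uc) U) :
    Tendsto vstar (𝓝[>] (0:ℝ)) (𝓝 2) := by
  have hwave : ∀ᶠ uc in 𝓝[>] (0 : ℝ), ∃ U, IsPTW f uc (vstar uc) U := by
    filter_upwards [Ioo_mem_nhdsGT one_pos] with uc huc using (hvstar uc huc).2
  refine tendsto_order.2 ⟨fun a ha => ?_, fun b hb => ?_⟩
  · filter_upwards [hwave, hf.eventually_lt_speed ha] with uc ⟨U, hU⟩ hlt using hlt _ U hU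
  · filter_upwards [hwave, Ioo_mem_nhdsGT one_pos] with uc ⟨U, hU⟩ huc
      using (hU.speed_lt_two hf huc).trans hb
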